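/- For every n ≥ 0 and every real v, Σ_{j=0}^{n} x_j(v)·s_{n−j}(v) = (2n + v)·s_n(v), where s_n(v) := Π_{m=1}^{n} (2m+v−2)(2m+v−1)/(2m) (equivalently, the generating function S(z,v)=Σ_n s_n(v) z^n with s_n(v)=((2n+v−2)(2n+v−1)/(2n))·s_{n−1}(v), s_0=1, satisfies X·S = v·S + 2z·∂_z S for X(z,v)=Σ_n x_n(v) z^n). -/

import Mathlib

open Polynomial

/-- `s_n(v) = Π_{m=1}^{n} (2m+v−2)(2m+v−1)/(2m)`. -/
noncomputable def s (n : ℕ) (v : ℝ) : ℝ :=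
  ∏ i ∈ Finset.range n,
    ((2 * ((i : ℝ) + 1) + v - 2) * (2 * ((i : ℝ) + 1) + v - 1) / (2 * ((i : ℝ) + 1)))

/-!
Write `a_j = x_j(v)` and `c_n = Σ_{p+q=n} a_p s_q`; we show `c_n = (2n+v) s_n` by strong induction.
Splitting off `p = 0`, `c_{n+1} = v s_{n+1} + Σ_{p+q=n} a_{p+1} s_q`, and the recurrence for `a_{p+1}`
produces a linear part and the triple convolution `a * a * s`. Reassociated as `a * (a * s)`, the
induction hypothesis turns it into `Σ a_p (2q+v) s_q`, so the weights `(2p+1) + (2q+v) = 2n+1+v` are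
constant on the antidiagonal and `c_{n+1} = v s_{n+1} + (2n+1+v)(2n+v) s_n`; the recurrence
`(2n+2) s_{n+1} = (2n+v)(2n+v+1) s_n` finishes.
-/

open Finset

section Convolution

variable {R : Type*} [CommRing R]

theorem sum_antidiagonal_convolution_assoc (a b c : ℕ → R) (n : ℕ) :
    ∑ p ∈ antidiagonal n, (∑ q ∈ antidiagonal p.1, a q.1 * b q.2) * c p.2 =
      ∑ p ∈ antidiagonal n, a p.1 * ∑ q ∈ antidiagonal p.2, b q.1 * c q.2 := by
  have h := congrArg (PowerSeries.coeff n)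
    (mul_assoc (PowerSeries.mk a) (PowerSeries.mk b) (PowerSeries.mk c))
  simpa only [PowerSeries.coeff_mul, PowerSeries.coeff_mk] using h

theorem sum_antidiagonal_mul_eq_two_mul_add_mul (a σ : ℕ → R) (v : R) (ha₀ : a 0 = v)
    (ha : ∀ m : ℕ, a (m + 1) = (2 * m + 1) * a m + ∑ p ∈ antidiagonal m, a p.1 * a p.2)
    (hσ : ∀ m : ℕ, (2 * m + 2) * σ (m + 1) = (2 * m + v) * (2 * m + v + 1) * σ m) (n : ℕ) :
    ∑ p ∈ antidiagonal n, a p.1 * σ p.2 = (2 * n + v) * σ n := by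
  induction n using Nat.strong_induction_on with
  | _ n ih =>
  rcases n with _ | m
  · simp [ha₀]
  have hquad : ∑ p ∈ antidiagonal m, (∑ q ∈ antidiagonal p.1, a q.1 * a q.2) * σ p.2 =
      ∑ p ∈ antidiagonal m, a p.1 * ((2 * p.2 + v) * σ p.2) := by
    rw [sum_antidiagonal_convolution_assoc]
    exact sum_congr rfl fun p hp => by rw [ih p.2 (Nat.antidiagonal.snd_lt hp)]
  have hshift : ∑ p ∈ antidiagonal m, a (p.1 + 1) * σ p.2 =
      (2 * m + 1 + v) * ∑ p ∈ antidiagonal m, a p.1 * σ p.2 := calc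
    _ = ∑ p ∈ antidiagonal m, ((2 * p.1 + 1) * a p.1 * σ p.2 +
          (∑ q ∈ antidiagonal p.1, a q.1 * a q.2) * σ p.2) :=
      sum_congr rfl fun p _ => by rw [ha]; ring
    _ = ∑ p ∈ antidiagonal m, ((2 * p.1 + 1) * a p.1 * σ p.2 + a p.1 * ((2 * p.2 + v) * σ p.2)) := by
      rw [sum_add_distrib, sum_add_distrib, hquad]
    _ = _ := by
      rw [mul_sum]
      refine sum_congr rfl fun p hp => ?_
      have hpm : (p.1 : R) + p.2 = m := by rw [← Nat.cast_add, mem_antidiagonal.mp hp]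
      linear_combination 2 * a p.1 * σ p.2 * hpm
  rw [Nat.sum_antidiagonal_succ, hshift, ih m m.lt_succ_self, ha₀]
  push_cast
  linear_combination -hσ m

end Convolution

theorem two_mul_add_two_mul_s_succ (m : ℕ) (v : ℝ) :
    (2 * m + 2) * s (m + 1) v = (2 * m + v) * (2 * m + v + 1) * s m v := by
  rw [s, prod_range_succ, ← s]
  field_simp
  ring

theorem vertices_linearized
    (x : ℕ → Polynomial ℝ) (hx0 : x 0 = X)
    (hx : ∀ n : ℕ, x (n + 1) =
      C (2 * ((n : ℝ) + 1) - 1) * x n + ∑ i ∈ Finset.range (n + 1), x i * x (n - i)) :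
    ∀ (n : ℕ) (v : ℝ),
      (∑ j ∈ Finset.range (n + 1), (x j).eval v * s (n - j) v) = (2 * (n : ℝ) + v) * s n v := by
  intro n v
  have hrec (m : ℕ) : (x (m + 1)).eval v = (2 * m + 1) * (x m).eval v +
      ∑ p ∈ antidiagonal m, (x p.1).eval v * (x p.2).eval v := by
    rw [hx, Nat.sum_antidiagonal_eq_sum_range_succ_mk]
    simp only [eval_add, eval_mul, eval_C, eval_finsetSum]
    ring
  have h := sum_antidiagonal_mul_eq_two_mul_add_mul (fun j => (x j).eval v) (fun k => s k v) v
    (by simp [hx0]) hrec (fun m => two_mul_add_two_mul_s_succ m v) n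
  rwa [Nat.sum_antidiagonal_eq_sum_range_succ_mk] at h
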